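/- In the support-2 setting with V_i = {a_i, b_i}, 0 < a_i < b_i, and 0 < q_i < 1 the probability of b_i: if p ∈ ∏[a_i,b_i] satisfies p_i > a_i for all i but p ≠ b = (b_1,...,b_n), then R(b) > R(p); i.e., p is not optimal. -/

import Mathlib

open Finset

/-- The maximum utility of the buyer at valuation `v` and prices `p`. -/
noncomputable def maxUtil {n : ℕ} (hn : 0 < n) (v p : Fin n → ℝ) : ℝ :=
  (univ : Finset (Fin n)).sup' ⟨⟨0, hn⟩, mem_univ _⟩ (fun i => v i - p i)

/-- The seller's revenue at valuation `v` and prices `p` under the maximum price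
tie-breaking rule. -/
noncomputable def Rev {n : ℕ} (hn : 0 < n) (v p : Fin n → ℝ) : ℝ :=
  if 0 ≤ maxUtil hn v p then
    sSup {x : ℝ | ∃ i, v i - p i = maxUtil hn v p ∧ p i = x}
  else 0

/-- The expected revenue of price vector `p`. -/
noncomputable def ExpRev {n : ℕ} (hn : 0 < n) (supp : Fin n → Finset ℝ)
    (μ : Fin n → ℝ → ℝ) (p : Fin n → ℝ) : ℝ :=
  ∑ v ∈ Fintype.piFinset supp, (∏ i, μ i (v i)) * Rev hn v p

/-!
For every valuation `v ∈ ∏ {a i, b i}`, the prices `b` earn at least as much as `p`: under `p > a`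
the buyer can only buy an item with `v i = b i`, such an item has the maximal utility `0` under
`b`, and the maximum price tie-breaking then yields at least `b i ≥ p i`. If `p i₀ < b i₀`, the
valuation equal to `b` at `i₀` and to `a` elsewhere has positive probability and leaves `i₀` as
the only item with nonnegative utility under both price vectors, so it earns `p i₀ < b i₀`.
-/

section Revenue

variable {n : ℕ} (hn : 0 < n) {v p : Fin n → ℝ}

lemma le_maxUtil (i : Fin n) : v i - p i ≤ maxUtil hn v p :=
  le_sup' (fun i => v i - p i) (mem_univ i)

lemma maxUtil_le {c : ℝ} (h : ∀ i, v i - p i ≤ c) : maxUtil hn v p ≤ c :=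
  sup'_le _ _ fun i _ => h i

lemma exists_maxUtil_eq : ∃ i, v i - p i = maxUtil hn v p := by
  obtain ⟨i, -, hi⟩ := exists_mem_eq_sup' ⟨⟨0, hn⟩, mem_univ _⟩ fun i => v i - p i
  exact ⟨i, hi.symm⟩

lemma maxUtil_anti {p' : Fin n → ℝ} (h : p ≤ p') : maxUtil hn v p' ≤ maxUtil hn v p :=
  maxUtil_le hn fun i => (sub_le_sub_left (h i) _).trans (le_maxUtil hn i)

lemma rev_of_maxUtil_neg (h : maxUtil hn v p < 0) : Rev hn v p = 0 :=
  if_neg h.not_ge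

lemma rev_le_of_forall_maximizer {c : ℝ} (h0 : 0 ≤ maxUtil hn v p)
    (h : ∀ i, v i - p i = maxUtil hn v p → p i ≤ c) : Rev hn v p ≤ c := by
  rw [Rev, if_pos h0]
  obtain ⟨i, hi⟩ := exists_maxUtil_eq hn (v := v) (p := p)
  refine csSup_le ⟨p i, i, hi, rfl⟩ ?_
  rintro _ ⟨j, hj, rfl⟩
  exact h j hj

lemma le_rev_of_maximizer {i : Fin n} (h0 : 0 ≤ v i - p i) (hi : v i - p i = maxUtil hn v p) :
    p i ≤ Rev hn v p := by
  rw [Rev, if_pos (hi ▸ h0)]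
  refine le_csSup ?_ ⟨i, hi, rfl⟩
  refine (Set.finite_range p).bddAbove.mono ?_
  rintro _ ⟨j, -, rfl⟩
  exact ⟨j, rfl⟩

lemma rev_eq_of_forall_ne_neg {i : Fin n} (h0 : 0 ≤ v i - p i)
    (hneg : ∀ j ≠ i, v j - p j < 0) : Rev hn v p = p i := by
  have hmax : maxUtil hn v p = v i - p i := by
    refine le_antisymm (maxUtil_le hn fun j => ?_) (le_maxUtil hn i)
    rcases eq_or_ne j i with rfl | hj
    · exact le_rfl
    · exact (hneg j hj).le.trans h0
  refine le_antisymm (rev_le_of_forall_maximizer hn (hmax ▸ h0) fun j hj => ?_)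
    (le_rev_of_maximizer hn h0 hmax.symm)
  by_contra hji
  have := hneg j (by rintro rfl; exact hji le_rfl)
  linarith

lemma rev_le_rev_of_le {b : Fin n → ℝ} (hpb : p ≤ b) (hvb : v ≤ b)
    (hbuy : ∀ i, p i ≤ v i → v i = b i) : Rev hn v p ≤ Rev hn v b := by
  rcases lt_or_ge (maxUtil hn v p) 0 with hneg | h0
  · rw [rev_of_maxUtil_neg hn hneg,
      rev_of_maxUtil_neg hn ((maxUtil_anti hn hpb).trans_lt hneg)]
  refine rev_le_of_forall_maximizer hn h0 fun i hi => ?_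
  have hvi : v i = b i := hbuy i (by linarith)
  have hmax : v i - b i = maxUtil hn v b :=
    le_antisymm (le_maxUtil hn i) (maxUtil_le hn fun j => by linarith [hvb j])
  calc p i ≤ b i := hpb i
    _ ≤ Rev hn v b := le_rev_of_maximizer hn (by linarith) hmax

lemma expRev_lt_expRev {supp : Fin n → Finset ℝ} {μ : Fin n → ℝ → ℝ} {p' : Fin n → ℝ}
    (hμ : ∀ i, ∀ x ∈ supp i, 0 < μ i x)
    (hle : ∀ v ∈ Fintype.piFinset supp, Rev hn v p ≤ Rev hn v p')
    (hlt : ∃ v ∈ Fintype.piFinset supp, Rev hn v p < Rev hn v p') :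
    ExpRev hn supp μ p < ExpRev hn supp μ p' := by
  have hw : ∀ v ∈ Fintype.piFinset supp, 0 < ∏ i, μ i (v i) := fun v hv =>
    prod_pos fun i _ => hμ i _ (Fintype.mem_piFinset.1 hv i)
  obtain ⟨v, hv, hvlt⟩ := hlt
  exact sum_lt_sum (fun v hv => mul_le_mul_of_nonneg_left (hle v hv) (hw v hv).le)
    ⟨v, hv, mul_lt_mul_of_pos_left hvlt (hw v hv)⟩

end Revenue

theorem support_two_all_above_a_not_optimal_general (n : ℕ) (hn : 0 < n)
    (a b : Fin n → ℝ) (hab : ∀ i, a i < b i)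
    (q : Fin n → ℝ) (hq : ∀ i, 0 < q i ∧ q i < 1)
    (p : Fin n → ℝ) (hpl : ∀ i, a i < p i) (hpu : ∀ i, p i ≤ b i)
    (hpb : p ≠ b) :
    ExpRev hn (fun i => {a i, b i})
        (fun i x => if x = b i then q i else 1 - q i) p <
      ExpRev hn (fun i => {a i, b i})
        (fun i x => if x = b i then q i else 1 - q i) b := by
  obtain ⟨i₀, hi₀⟩ : ∃ i, p i < b i := by
    by_contra! h
    exact hpb (funext fun i => (hpu i).antisymm (h i))
  have hvals : ∀ v ∈ Fintype.piFinset (fun i => ({a i, b i} : Finset ℝ)),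
      ∀ i, v i = a i ∨ v i = b i := by
    simp [Fintype.mem_piFinset]
  set v₀ := Function.update a i₀ (b i₀)
  have hv₀ : ∀ j ≠ i₀, v₀ j = a j := fun j hj => Function.update_of_ne hj _ _
  have hv₀i₀ : v₀ i₀ = b i₀ := Function.update_self _ _ _
  refine expRev_lt_expRev hn (fun i x _ => by split_ifs <;> linarith [hq i]) (fun v hv => ?_)
    ⟨v₀, Fintype.mem_piFinset.2 fun j => ?_, ?_⟩
  · refine rev_le_rev_of_le hn hpu (fun i => ?_) fun i hi => ?_
    · rcases hvals v hv i with h | h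
      exacts [h.trans_le (hab i).le, h.le]
    · exact (hvals v hv i).resolve_left fun h => by linarith [hpl i]
  · rcases eq_or_ne j i₀ with rfl | hj
    · simp [hv₀i₀]
    · simp [hv₀ j hj]
  · have hneg (c : Fin n → ℝ) (hc : ∀ j, a j < c j) : ∀ j ≠ i₀, v₀ j - c j < 0 :=
      fun j hj => by linarith [hv₀ j hj, hc j]
    rw [rev_eq_of_forall_ne_neg hn (by linarith) (hneg p hpl),
      rev_eq_of_forall_ne_neg hn (by linarith) (hneg b hab)]
    exact hi₀

theorem support_two_all_above_a_not_optimal (n : ℕ) (hn : 0 < n)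
    (a b : Fin n → ℝ) (ha : ∀ i, 0 < a i) (hab : ∀ i, a i < b i)
    (q : Fin n → ℝ) (hq : ∀ i, 0 < q i ∧ q i < 1)
    (p : Fin n → ℝ) (hpl : ∀ i, a i < p i) (hpu : ∀ i, p i ≤ b i)
    (hpb : p ≠ b) :
    ExpRev hn (fun i => {a i, b i})
        (fun i x => if x = b i then q i else 1 - q i) p <
      ExpRev hn (fun i => {a i, b i})
        (fun i x => if x = b i then q i else 1 - q i) b :=
  support_two_all_above_a_not_optimal_general n hn a b hab q hq p hpl hpu hpb
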